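/- arXiv:2007.00699 — 5 statements merged into one kernel-verified Lean document; each statement's English description precedes it below -/
import Mathlib

section
/- Let θ₋₁ = 1, θ_k² = (1 - θ_k)θ_{k-1}² with θ_k ∈ (0,1), and define δ₀ = 1, δ_{k+1} = (1 - θ_k)δ_k. Then δ_k = θ_{k-1}² for all k ≥ 0, and δ_k ≤ 4/(k+2)² for all k ≥ 0. -/
/-- With `θ 0 = 1` (playing the role of `θ₋₁`), `θ (k+1)² = (1 - θ (k+1)) θ k²`,
`θ (k+1) ∈ (0,1)`, and `δ 0 = 1`, `δ (k+1) = (1 - θ (k+1)) δ k`, we have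
`δ k = θ k²` (i.e. `δ_k = θ_{k-1}²`) and `δ k ≤ 4/(k+2)²` for all `k ≥ 0`. -/
theorem delta_eq_theta_sq_and_bound (θ δ : ℕ → ℝ) (hθ0 : θ 0 = 1)
    (hθpos : ∀ k, 0 < θ (k + 1)) (hθlt : ∀ k, θ (k + 1) < 1)
    (hrec : ∀ k, (θ (k + 1)) ^ 2 = (1 - θ (k + 1)) * (θ k) ^ 2)
    (hδ0 : δ 0 = 1) (hδ : ∀ k, δ (k + 1) = (1 - θ (k + 1)) * δ k) :
    ∀ k, δ k = (θ k) ^ 2 ∧ δ k ≤ 4 / ((k : ℝ) + 2) ^ 2 := by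
  have hpos : ∀ k, 0 < θ k := by
    intro k; cases k with
    | zero => rw [hθ0]; norm_num
    | succ n => exact hθpos n
  -- δ k = θ k ^ 2
  have heq : ∀ k, δ k = (θ k) ^ 2 := by
    intro k
    induction k with
    | zero => rw [hδ0, hθ0]; norm_num
    | succ n ih => rw [hδ n, ih, hrec n]
  -- θ k * (k + 2) ≤ 2
  have hbd : ∀ k, θ k * ((k : ℝ) + 2) ≤ 2 := by
    intro k
    induction k with
    | zero => rw [hθ0]; norm_num
    | succ n ih =>
      have ha := hpos n
      have hb := hθpos n
      have hr := hrec n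
      -- key: 2 * θ n ≥ 2 * θ (n+1) + θ n * θ (n+1)
      have key : 2 * θ (n + 1) + θ n * θ (n + 1) ≤ 2 * θ n := by
        nlinarith [sq_nonneg (θ n - θ (n + 1)), sq_nonneg (θ n + θ (n + 1)),
          mul_pos ha hb]
      push_cast
      nlinarith [mul_pos ha hb, mul_nonneg hb.le (by positivity : (0:ℝ) ≤ (n:ℝ))]
  intro k
  refine ⟨heq k, ?_⟩
  rw [heq k]
  have h2 : (0:ℝ) < (k : ℝ) + 2 := by positivity
  have := hbd k
  have hθk : θ k ≤ 2 / ((k : ℝ) + 2) := by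
    rw [le_div_iff₀ h2]; linarith
  have hθknn : 0 ≤ θ k := (hpos k).le
  calc (θ k) ^ 2 ≤ (2 / ((k : ℝ) + 2)) ^ 2 := by
        exact pow_le_pow_left₀ hθknn hθk 2
    _ = 4 / ((k : ℝ) + 2) ^ 2 := by rw [div_pow]; norm_num
end

section
/- For the entropy-regularized dual objective L with optimum λ*, the initial gap satisfies L(0) - L(λ*) ≤ 2(m + n)‖C‖_∞ + (2/η)(m + n)·log d. -/
open Finset

noncomputable section

variable {n m d : ℕ}

/-- The endpoint of edge `e` at side `s`. -/
def ep (ends : Fin m → Fin n × Fin n) (e : Fin m) (s : Fin 2) : Fin n :=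
  if s = 0 then (ends e).1 else (ends e).2

/-- Unnormalized vertex factor of the entropy-regularized dual. -/
def vExp (η : ℝ) (ends : Fin m → Fin n × Fin n) (Ci : Fin n → Fin d → ℝ)
    (lam : Fin m → Fin 2 → Fin d → ℝ) (i : Fin n) (x : Fin d) : ℝ :=
  Real.exp (η * (-(Ci i x) +
    ∑ e, ∑ s, if ep ends e s = i then lam e s x else 0))

/-- Unnormalized edge factor of the entropy-regularized dual. -/
def eExp (η : ℝ) (Ce : Fin m → Fin d → Fin d → ℝ)
    (lam : Fin m → Fin 2 → Fin d → ℝ) (e : Fin m) (x₁ x₂ : Fin d) : ℝ :=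
  Real.exp (η * (-(Ce e x₁ x₂) - lam e 0 x₁ - lam e 1 x₂))

/-- The dual objective `L` of the entropy-regularized local-polytope LP. -/
def dualL (η : ℝ) (ends : Fin m → Fin n × Fin n) (Ci : Fin n → Fin d → ℝ)
    (Ce : Fin m → Fin d → Fin d → ℝ) (lam : Fin m → Fin 2 → Fin d → ℝ) : ℝ :=
  (1 / η) * ∑ i, Real.log (∑ x, vExp η ends Ci lam i x)
    + (1 / η) * ∑ e, Real.log (∑ x₁, ∑ x₂, eExp η Ce lam e x₁ x₂)

lemma vExp_pos (η : ℝ) (ends : Fin m → Fin n × Fin n) (Ci : Fin n → Fin d → ℝ)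
    (lam : Fin m → Fin 2 → Fin d → ℝ) (i : Fin n) (x : Fin d) :
    0 < vExp η ends Ci lam i x := Real.exp_pos _

lemma eExp_pos (η : ℝ) (Ce : Fin m → Fin d → Fin d → ℝ)
    (lam : Fin m → Fin 2 → Fin d → ℝ) (e : Fin m) (x₁ x₂ : Fin d) :
    0 < eExp η Ce lam e x₁ x₂ := Real.exp_pos _

/-- Lower bound on `L(λ)` for every `λ`: evaluate log-sum-exps at a single
consistent labeling; the dual variables cancel. -/
lemma dualL_lower (η : ℝ) (hη : 0 < η) (hd0 : 0 < d)
    (ends : Fin m → Fin n × Fin n)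
    (Ci : Fin n → Fin d → ℝ) (Ce : Fin m → Fin d → Fin d → ℝ)
    (Cinf : ℝ) (hCi : ∀ i x, |Ci i x| ≤ Cinf)
    (hCe : ∀ e x₁ x₂, |Ce e x₁ x₂| ≤ Cinf)
    (lam : Fin m → Fin 2 → Fin d → ℝ) :
    -(((n : ℝ) + m) * Cinf) ≤ dualL η ends Ci Ce lam := by
  set x0 : Fin d := ⟨0, hd0⟩
  have hv : ∀ i : Fin n,
      η * (-(Ci i x0) + ∑ e, ∑ s, if ep ends e s = i then lam e s x0 else 0)
        ≤ Real.log (∑ x, vExp η ends Ci lam i x) := by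
    intro i
    have h1 : vExp η ends Ci lam i x0 ≤ ∑ x, vExp η ends Ci lam i x :=
      Finset.single_le_sum (f := fun x => vExp η ends Ci lam i x)
        (fun x _ => (vExp_pos η ends Ci lam i x).le) (Finset.mem_univ x0)
    calc η * (-(Ci i x0) + ∑ e, ∑ s, if ep ends e s = i then lam e s x0 else 0)
        = Real.log (vExp η ends Ci lam i x0) := by rw [vExp, Real.log_exp]
      _ ≤ _ := Real.log_le_log (vExp_pos η ends Ci lam i x0) h1
  have he : ∀ e : Fin m,
      η * (-(Ce e x0 x0) - lam e 0 x0 - lam e 1 x0)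
        ≤ Real.log (∑ x₁, ∑ x₂, eExp η Ce lam e x₁ x₂) := by
    intro e
    have h1 : eExp η Ce lam e x0 x0 ≤ ∑ x₂, eExp η Ce lam e x0 x₂ :=
      Finset.single_le_sum (f := fun x => eExp η Ce lam e x0 x)
        (fun x _ => (eExp_pos η Ce lam e x0 x).le) (Finset.mem_univ x0)
    have h2 : (∑ x₂, eExp η Ce lam e x0 x₂) ≤ ∑ x₁, ∑ x₂, eExp η Ce lam e x₁ x₂ :=
      Finset.single_le_sum (f := fun x => ∑ x₂, eExp η Ce lam e x x₂)
        (fun x _ => Finset.sum_nonneg fun y _ => (eExp_pos η Ce lam e x y).le)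
        (Finset.mem_univ x0)
    calc η * (-(Ce e x0 x0) - lam e 0 x0 - lam e 1 x0)
        = Real.log (eExp η Ce lam e x0 x0) := by rw [eExp, Real.log_exp]
      _ ≤ _ := Real.log_le_log (eExp_pos η Ce lam e x0 x0) (h1.trans h2)
  have hs1 : ∑ i, η * (-(Ci i x0) + ∑ e, ∑ s, if ep ends e s = i then lam e s x0 else 0)
      ≤ ∑ i, Real.log (∑ x, vExp η ends Ci lam i x) :=
    Finset.sum_le_sum fun i _ => hv i
  have hs2 : ∑ e, η * (-(Ce e x0 x0) - lam e 0 x0 - lam e 1 x0)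
      ≤ ∑ e, Real.log (∑ x₁, ∑ x₂, eExp η Ce lam e x₁ x₂) :=
    Finset.sum_le_sum fun e _ => he e
  -- the lam terms cancel
  have hswap : ∑ i, ∑ e, ∑ s, (if ep ends e s = i then lam e s x0 else 0)
      = ∑ e : Fin m, (lam e 0 x0 + lam e 1 x0) := by
    rw [Finset.sum_comm]
    refine Finset.sum_congr rfl fun e _ => ?_
    rw [Finset.sum_comm]
    simp [Fin.sum_univ_two]
  have hCiB : -((n : ℝ) * Cinf) ≤ ∑ i, -(Ci i x0) := by
    have : ∑ i : Fin n, -Cinf ≤ ∑ i, -(Ci i x0) :=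
      Finset.sum_le_sum fun i _ => by linarith [abs_le.mp (hCi i x0)]
    simpa using this
  have hCeB : -((m : ℝ) * Cinf) ≤ ∑ e, -(Ce e x0 x0) := by
    have : ∑ e : Fin m, -Cinf ≤ ∑ e, -(Ce e x0 x0) :=
      Finset.sum_le_sum fun e _ => by linarith [abs_le.mp (hCe e x0 x0)]
    simpa using this
  have key : η * (-(((n : ℝ) + m) * Cinf))
      ≤ (∑ i, Real.log (∑ x, vExp η ends Ci lam i x))
        + ∑ e, Real.log (∑ x₁, ∑ x₂, eExp η Ce lam e x₁ x₂) := by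
    have e1 : ∑ i, η * (-(Ci i x0) + ∑ e, ∑ s, if ep ends e s = i then lam e s x0 else 0)
        = η * ((∑ i, -(Ci i x0)) + ∑ e : Fin m, (lam e 0 x0 + lam e 1 x0)) := by
      rw [← Finset.mul_sum, Finset.sum_add_distrib, hswap]
    have e2 : ∑ e, η * (-(Ce e x0 x0) - lam e 0 x0 - lam e 1 x0)
        = η * ((∑ e, -(Ce e x0 x0)) - ∑ e : Fin m, (lam e 0 x0 + lam e 1 x0)) := by
      rw [← Finset.mul_sum]
      congr 1
      rw [← Finset.sum_sub_distrib]
      exact Finset.sum_congr rfl fun e _ => by ring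
    rw [e1] at hs1; rw [e2] at hs2
    nlinarith [hs1, hs2, hCiB, hCeB, hη]
  rw [dualL]
  have := mul_le_mul_of_nonneg_left key (le_of_lt (one_div_pos.mpr hη))
  rw [← mul_assoc, one_div_mul_cancel (ne_of_gt hη), one_mul] at this
  linarith

/-- Upper bound on `L(0)`. -/
lemma dualL_zero_upper (η : ℝ) (hη : 0 < η) (hd0 : 0 < d)
    (ends : Fin m → Fin n × Fin n)
    (Ci : Fin n → Fin d → ℝ) (Ce : Fin m → Fin d → Fin d → ℝ)
    (Cinf : ℝ) (hCi : ∀ i x, |Ci i x| ≤ Cinf)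
    (hCe : ∀ e x₁ x₂, |Ce e x₁ x₂| ≤ Cinf) :
    dualL η ends Ci Ce 0
      ≤ ((n : ℝ) + m) * Cinf + (1 / η) * (((n : ℝ) + 2 * m) * Real.log d) := by
  have hdR : (0 : ℝ) < d := by exact_mod_cast hd0
  have hv : ∀ i : Fin n, Real.log (∑ x, vExp η ends Ci (0 : Fin m → Fin 2 → Fin d → ℝ) i x)
      ≤ Real.log d + η * Cinf := by
    intro i
    have hb : ∀ x : Fin d, vExp η ends Ci 0 i x ≤ Real.exp (η * Cinf) := by
      intro x
      rw [vExp]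
      apply Real.exp_le_exp.mpr
      have h0 : (∑ e, ∑ s, if ep ends e s = i then (0 : Fin m → Fin 2 → Fin d → ℝ) e s x else 0) = 0 := by
        simp
      rw [h0, add_zero]
      have := abs_le.mp (hCi i x)
      nlinarith
    have hsum : (∑ x, vExp η ends Ci 0 i x) ≤ (d : ℝ) * Real.exp (η * Cinf) := by
      calc (∑ x, vExp η ends Ci 0 i x) ≤ ∑ _x : Fin d, Real.exp (η * Cinf) :=
            Finset.sum_le_sum fun x _ => hb x
        _ = (d : ℝ) * Real.exp (η * Cinf) := by simp [Finset.sum_const, mul_comm]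
    calc Real.log (∑ x, vExp η ends Ci 0 i x)
        ≤ Real.log ((d : ℝ) * Real.exp (η * Cinf)) :=
          Real.log_le_log (Finset.sum_pos (fun x _ => vExp_pos η ends Ci 0 i x)
            ⟨⟨0, hd0⟩, Finset.mem_univ _⟩) hsum
      _ = Real.log d + η * Cinf := by
          rw [Real.log_mul (ne_of_gt hdR) (Real.exp_ne_zero _), Real.log_exp]
  have he : ∀ e : Fin m,
      Real.log (∑ x₁, ∑ x₂, eExp η Ce (0 : Fin m → Fin 2 → Fin d → ℝ) e x₁ x₂)
        ≤ 2 * Real.log d + η * Cinf := by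
    intro e
    have hb : ∀ x₁ x₂ : Fin d, eExp η Ce 0 e x₁ x₂ ≤ Real.exp (η * Cinf) := by
      intro x₁ x₂
      rw [eExp]
      apply Real.exp_le_exp.mpr
      have := abs_le.mp (hCe e x₁ x₂)
      simp only [Pi.zero_apply, sub_zero]
      nlinarith
    have hsum : (∑ x₁, ∑ x₂, eExp η Ce 0 e x₁ x₂)
        ≤ (d : ℝ) * ((d : ℝ) * Real.exp (η * Cinf)) := by
      calc (∑ x₁, ∑ x₂, eExp η Ce 0 e x₁ x₂)
          ≤ ∑ _x₁ : Fin d, ∑ _x₂ : Fin d, Real.exp (η * Cinf) :=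
            Finset.sum_le_sum fun x₁ _ => Finset.sum_le_sum fun x₂ _ => hb x₁ x₂
        _ = (d : ℝ) * ((d : ℝ) * Real.exp (η * Cinf)) := by
            simp [Finset.sum_const, mul_comm]
    calc Real.log (∑ x₁, ∑ x₂, eExp η Ce 0 e x₁ x₂)
        ≤ Real.log ((d : ℝ) * ((d : ℝ) * Real.exp (η * Cinf))) :=
          Real.log_le_log (Finset.sum_pos (fun x _ => Finset.sum_pos
            (fun y _ => eExp_pos η Ce 0 e x y) ⟨⟨0, hd0⟩, Finset.mem_univ _⟩)
            ⟨⟨0, hd0⟩, Finset.mem_univ _⟩) hsum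
      _ = 2 * Real.log d + η * Cinf := by
          rw [Real.log_mul (ne_of_gt hdR) (by positivity),
            Real.log_mul (ne_of_gt hdR) (Real.exp_ne_zero _), Real.log_exp]
          ring
  have hs1 : ∑ i, Real.log (∑ x, vExp η ends Ci (0 : Fin m → Fin 2 → Fin d → ℝ) i x)
      ≤ (n : ℝ) * (Real.log d + η * Cinf) := by
    calc _ ≤ ∑ _i : Fin n, (Real.log d + η * Cinf) :=
          Finset.sum_le_sum fun i _ => hv i
      _ = (n : ℝ) * (Real.log d + η * Cinf) := by simp [mul_comm]; ring
  have hs2 : ∑ e, Real.log (∑ x₁, ∑ x₂, eExp η Ce (0 : Fin m → Fin 2 → Fin d → ℝ) e x₁ x₂)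
      ≤ (m : ℝ) * (2 * Real.log d + η * Cinf) := by
    calc _ ≤ ∑ _e : Fin m, (2 * Real.log d + η * Cinf) :=
          Finset.sum_le_sum fun e _ => he e
      _ = (m : ℝ) * (2 * Real.log d + η * Cinf) := by simp [mul_comm]; ring
  have h1η : (0:ℝ) ≤ 1 / η := (one_div_pos.mpr hη).le
  rw [dualL]
  have := add_le_add (mul_le_mul_of_nonneg_left hs1 h1η)
    (mul_le_mul_of_nonneg_left hs2 h1η)
  refine this.trans (le_of_eq ?_)
  field_simp
  ring

/-- The initial dual gap satisfies
`L(0) - L(λ*) ≤ 2(m+n)‖C‖_∞ + (2/η)(m+n) log d`. -/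
theorem dualL_initial_gap (η : ℝ) (hη : 0 < η) (hd : 2 ≤ d)
    (ends : Fin m → Fin n × Fin n)
    (Ci : Fin n → Fin d → ℝ) (Ce : Fin m → Fin d → Fin d → ℝ)
    (Cinf : ℝ) (hCi : ∀ i x, |Ci i x| ≤ Cinf)
    (hCe : ∀ e x₁ x₂, |Ce e x₁ x₂| ≤ Cinf)
    (lamstar : Fin m → Fin 2 → Fin d → ℝ)
    (hstar : ∀ lam, dualL η ends Ci Ce lamstar ≤ dualL η ends Ci Ce lam) :
    dualL η ends Ci Ce 0 - dualL η ends Ci Ce lamstar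
      ≤ 2 * ((m : ℝ) + n) * Cinf + (2 / η) * ((m : ℝ) + n) * Real.log d := by
  have hd0 : 0 < d := by omega
  have hd1 : (1:ℝ) ≤ d := by exact_mod_cast Nat.one_le_iff_ne_zero.mpr (by omega)
  have hlogd : 0 ≤ Real.log d := Real.log_nonneg hd1
  have hlow := dualL_lower η hη hd0 ends Ci Ce Cinf hCi hCe lamstar
  have hup := dualL_zero_upper η hη hd0 ends Ci Ce Cinf hCi hCe
  have h1η : 0 < 1 / η := one_div_pos.mpr hη
  have h2η : (2 : ℝ) / η = 2 * (1 / η) := by ring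
  rw [h2η]
  nlinarith [mul_le_mul_of_nonneg_left hlogd (le_of_lt h1η)]


end
end

section
/- Consider the EMP update for an edge e = {i,j} and endpoint i: λ'_{e,i}(x) = λ_{e,i}(x) + (1/(2η))·log(S_{e,i}^λ(x)/μ_i^λ(x)), all other coordinates unchanged. Then the resulting dual iterate λ' satisfies the block optimality condition S_{e,i}^{λ'}(x) = μ_i^{λ'}(x) for all x ∈ χ, i.e., λ' minimizes L over the block coordinate {λ_{e,i}(x)}_{x∈χ}. -/
open Finset

noncomputable section

variable {n m d : ℕ}

/-- Normalized vertex pseudo-marginal `μ_i^λ`. -/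
def muV (η : ℝ) (ends : Fin m → Fin n × Fin n) (Ci : Fin n → Fin d → ℝ)
    (lam : Fin m → Fin 2 → Fin d → ℝ) (i : Fin n) (x : Fin d) : ℝ :=
  vExp η ends Ci lam i x / ∑ x', vExp η ends Ci lam i x'

/-- Normalized edge pseudo-marginal `μ_e^λ`. -/
def muE (η : ℝ) (Ce : Fin m → Fin d → Fin d → ℝ)
    (lam : Fin m → Fin 2 → Fin d → ℝ) (e : Fin m) (x₁ x₂ : Fin d) : ℝ :=
  eExp η Ce lam e x₁ x₂ / ∑ y₁, ∑ y₂, eExp η Ce lam e y₁ y₂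

/-- Marginalization `S_{e,i}^λ` of the edge pseudo-marginal onto endpoint `s`. -/
def Smarg (η : ℝ) (Ce : Fin m → Fin d → Fin d → ℝ)
    (lam : Fin m → Fin 2 → Fin d → ℝ) (e : Fin m) (s : Fin 2) (x : Fin d) : ℝ :=
  if s = 0 then ∑ x₂, muE η Ce lam e x x₂ else ∑ x₁, muE η Ce lam e x₁ x

/-- The EMP update at edge `e₀`, endpoint `s₀`:
`λ'_{e₀,i₀}(x) = λ_{e₀,i₀}(x) + (1/(2η)) log (S_{e₀,i₀}^λ(x)/μ_{i₀}^λ(x))`,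
all other coordinates unchanged. -/
def empUpdate (η : ℝ) (ends : Fin m → Fin n × Fin n) (Ci : Fin n → Fin d → ℝ)
    (Ce : Fin m → Fin d → Fin d → ℝ) (lam : Fin m → Fin 2 → Fin d → ℝ)
    (e₀ : Fin m) (s₀ : Fin 2) : Fin m → Fin 2 → Fin d → ℝ :=
  fun e s x =>
    if e = e₀ ∧ s = s₀ then
      lam e s x + (1 / (2 * η)) *
        Real.log (Smarg η Ce lam e s x / muV η ends Ci lam (ep ends e s) x)
    else lam e s x
/-!
Along the block, `L` is, up to a constant, `η⁻¹ (log ∑ₓ v x t x + log ∑ₓ T x / t x)`, where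
`t = exp (η (λ'_{e,i} - λ_{e,i}))`, `v` are the vertex factors at `i` and `T` the unnormalized
edge marginals at `λ`. By Cauchy–Schwarz the product of the two sums is at least `(∑ₓ √(v x T x))²`,
with equality when `v t² ∝ T`. The EMP update takes `t² = S/μ`, which is such a balanced tilt;
there both updated pseudo-marginals are proportional to `√(v T)`, hence equal.
-/

open Real

section BlockObjective

variable {ι : Type*} [Fintype ι]

def blockObjective (a b t : ι → ℝ) : ℝ :=
  log (∑ x, a x * t x) + log (∑ x, b x / t x)

lemma sq_sum_sqrt_mul_le {a b w : ι → ℝ} (ha : ∀ x, 0 ≤ a x) (hb : ∀ x, 0 ≤ b x)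
    (hw : ∀ x, 0 < w x) :
    (∑ x, √(a x * b x)) ^ 2 ≤ (∑ x, a x * w x) * ∑ x, b x / w x :=
  sum_sq_le_sum_mul_sum_of_sq_le_mul _ (fun x _ => mul_nonneg (ha x) (hw x).le)
    (fun x _ => div_nonneg (hb x) (hw x).le) fun x _ => le_of_eq <| by
      rw [sq_sqrt (mul_nonneg (ha x) (hb x))]
      field_simp [(hw x).ne']

lemma mul_sum_div_eq_sq_sum_sqrt_of_balanced {a b t : ι → ℝ} {c : ℝ} (ha : ∀ x, 0 ≤ a x)
    (ht : ∀ x, 0 < t x) (hc : 0 < c) (hbal : ∀ x, a x * t x ^ 2 = c * b x) :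
    (∑ x, a x * t x) * ∑ x, b x / t x = (∑ x, √(a x * b x)) ^ 2 := by
  have hdiv : ∀ x, b x / t x = a x * t x / c := fun x => by
    field_simp [(ht x).ne']
    linear_combination (hbal x).symm
  have hsqrt : ∀ x, √(a x * b x) = a x * t x / √c := fun x => by
    rw [eq_div_iff (sqrt_pos.2 hc).ne', ← sqrt_mul' _ hc.le,
      ← sqrt_sq (mul_nonneg (ha x) (ht x).le)]
    congr 1
    linear_combination (-a x) * hbal x
  simp_rw [hdiv, hsqrt, ← sum_div, div_pow, sq_sqrt hc.le]
  ring

lemma div_sum_eq_div_sum_of_balanced {a b t : ι → ℝ} {c : ℝ} (ht : ∀ x, t x ≠ 0) (hc : c ≠ 0)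
    (hbal : ∀ x, a x * t x ^ 2 = c * b x) (x : ι) :
    a x * t x / ∑ y, a y * t y = b x / t x / ∑ y, b y / t y := by
  have h : ∀ y, a y * t y = c * (b y / t y) := fun y => by
    field_simp [ht y]
    linear_combination hbal y
  simp_rw [h]
  rw [← mul_sum, mul_div_mul_left _ _ hc]

lemma blockObjective_le_of_balanced [Nonempty ι] {a b t w : ι → ℝ} {c : ℝ}
    (ha : ∀ x, 0 < a x) (hb : ∀ x, 0 < b x) (ht : ∀ x, 0 < t x) (hw : ∀ x, 0 < w x)
    (hc : 0 < c) (hbal : ∀ x, a x * t x ^ 2 = c * b x) :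
    blockObjective a b t ≤ blockObjective a b w := by
  have hpos : ∀ s : ι → ℝ, (∀ x, 0 < s x) →
      0 < ∑ x, a x * s x ∧ 0 < ∑ x, b x / s x := fun s hs =>
    ⟨sum_pos (fun x _ => mul_pos (ha x) (hs x)) univ_nonempty,
      sum_pos (fun x _ => div_pos (hb x) (hs x)) univ_nonempty⟩
  obtain ⟨hat, hbt⟩ := hpos t ht
  obtain ⟨haw, hbw⟩ := hpos w hw
  rw [blockObjective, blockObjective, ← log_mul hat.ne' hbt.ne', ← log_mul haw.ne' hbw.ne']
  refine log_le_log (mul_pos hat hbt) ?_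
  rw [mul_sum_div_eq_sq_sum_sqrt_of_balanced (fun x => (ha x).le) ht hc hbal]
  exact sq_sum_sqrt_mul_le (fun x => (ha x).le) (fun x => (hb x).le) hw

end BlockObjective

lemma sum_sum_eq_add_sub_of_eq_off {α β : Type*} [Fintype α] [Fintype β] [DecidableEq α]
    [DecidableEq β] {f g : α → β → ℝ} {a : α} {b : β}
    (h : ∀ i j, ¬(i = a ∧ j = b) → g i j = f i j) :
    ∑ i, ∑ j, g i j = ∑ i, ∑ j, f i j + (g a b - f a b) := by
  have hg : ∀ i j, g i j = f i j + if i = a ∧ j = b then g a b - f a b else 0 := fun i j => by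
    by_cases hij : i = a ∧ j = b
    · obtain ⟨rfl, rfl⟩ := hij
      simp
    · simp [h i j hij, hij]
  rw [sum_congr rfl fun i _ => sum_congr rfl fun j _ => hg i j]
  simp [sum_add_distrib, ite_and]

section Block

variable {η : ℝ} {ends : Fin m → Fin n × Fin n} {Ci : Fin n → Fin d → ℝ}
  {Ce : Fin m → Fin d → Fin d → ℝ} {lam lam' : Fin m → Fin 2 → Fin d → ℝ}
  {e₀ : Fin m} {s₀ : Fin 2}

def AgreeOffBlock (lam lam' : Fin m → Fin 2 → Fin d → ℝ) (e₀ : Fin m) (s₀ : Fin 2) : Prop :=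
  ∀ e s x, ¬(e = e₀ ∧ s = s₀) → lam' e s x = lam e s x

def blockTilt (η : ℝ) (lam lam' : Fin m → Fin 2 → Fin d → ℝ) (e₀ : Fin m) (s₀ : Fin 2)
    (x : Fin d) : ℝ :=
  exp (η * (lam' e₀ s₀ x - lam e₀ s₀ x))

def eMarg (η : ℝ) (Ce : Fin m → Fin d → Fin d → ℝ) (lam : Fin m → Fin 2 → Fin d → ℝ)
    (e : Fin m) (s : Fin 2) (x : Fin d) : ℝ :=
  if s = 0 then ∑ y, eExp η Ce lam e x y else ∑ y, eExp η Ce lam e y x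

lemma eMarg_pos [Nonempty (Fin d)] (x : Fin d) : 0 < eMarg η Ce lam e₀ s₀ x := by
  unfold eMarg
  split <;> exact sum_pos (fun _ _ => exp_pos _) univ_nonempty

lemma sum_eMarg (e : Fin m) (s : Fin 2) :
    ∑ x, eMarg η Ce lam e s x = ∑ x₁, ∑ x₂, eExp η Ce lam e x₁ x₂ := by
  unfold eMarg
  split
  · rfl
  · exact sum_comm

lemma Smarg_eq_eMarg_div (e : Fin m) (s : Fin 2) (x : Fin d) :
    Smarg η Ce lam e s x = eMarg η Ce lam e s x / ∑ y, eMarg η Ce lam e s y := by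
  rw [sum_eMarg]
  unfold Smarg muE eMarg
  split <;> rw [sum_div]

lemma vExp_of_agreeOffBlock (h : AgreeOffBlock lam lam' e₀ s₀) (i : Fin n) (x : Fin d) :
    vExp η ends Ci lam' i x =
      vExp η ends Ci lam i x * if ep ends e₀ s₀ = i then blockTilt η lam lam' e₀ s₀ x else 1 := by
  unfold vExp blockTilt
  rw [sum_sum_eq_add_sub_of_eq_off (a := e₀) (b := s₀) fun e s hes => by rw [h e s x hes]]
  split_ifs with hi
  · rw [← exp_add]
    ring_nf
  · simp

lemma eExp_of_agreeOffBlock_of_ne (h : AgreeOffBlock lam lam' e₀ s₀) {e : Fin m} (he : e ≠ e₀)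
    (x₁ x₂ : Fin d) : eExp η Ce lam' e x₁ x₂ = eExp η Ce lam e x₁ x₂ := by
  unfold eExp
  rw [h e 0 x₁ (by simp [he]), h e 1 x₂ (by simp [he])]

lemma eMarg_of_agreeOffBlock (h : AgreeOffBlock lam lam' e₀ s₀) (x : Fin d) :
    eMarg η Ce lam' e₀ s₀ x = eMarg η Ce lam e₀ s₀ x / blockTilt η lam lam' e₀ s₀ x := by
  unfold eMarg eExp blockTilt
  fin_cases s₀ <;> simp only [Fin.zero_eta, Fin.mk_one, Fin.isValue, if_true, one_ne_zero,
    if_false, sum_div] <;> refine sum_congr rfl fun y _ => ?_ <;>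
    rw [eq_div_iff (exp_pos _).ne', ← exp_add]
  · rw [h e₀ 1 y (by simp)]
    ring_nf
  · rw [h e₀ 0 y (by simp)]
    ring_nf

lemma Smarg_of_agreeOffBlock (h : AgreeOffBlock lam lam' e₀ s₀) (x : Fin d) :
    Smarg η Ce lam' e₀ s₀ x =
      eMarg η Ce lam e₀ s₀ x / blockTilt η lam lam' e₀ s₀ x /
        ∑ y, eMarg η Ce lam e₀ s₀ y / blockTilt η lam lam' e₀ s₀ y := by
  simp_rw [Smarg_eq_eMarg_div, eMarg_of_agreeOffBlock h]

lemma muV_of_agreeOffBlock (h : AgreeOffBlock lam lam' e₀ s₀) (x : Fin d) :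
    muV η ends Ci lam' (ep ends e₀ s₀) x =
      vExp η ends Ci lam (ep ends e₀ s₀) x * blockTilt η lam lam' e₀ s₀ x /
        ∑ y, vExp η ends Ci lam (ep ends e₀ s₀) y * blockTilt η lam lam' e₀ s₀ y := by
  simp_rw [muV, vExp_of_agreeOffBlock h, if_true]

lemma exists_dualL_eq_blockObjective_add (η : ℝ) (ends : Fin m → Fin n × Fin n)
    (Ci : Fin n → Fin d → ℝ) (Ce : Fin m → Fin d → Fin d → ℝ)
    (lam : Fin m → Fin 2 → Fin d → ℝ) (e₀ : Fin m) (s₀ : Fin 2) :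
    ∃ R, ∀ lam', AgreeOffBlock lam lam' e₀ s₀ →
      dualL η ends Ci Ce lam' = 1 / η * blockObjective (vExp η ends Ci lam (ep ends e₀ s₀))
        (eMarg η Ce lam e₀ s₀) (blockTilt η lam lam' e₀ s₀) + R := by
  refine ⟨1 / η * ∑ i ∈ univ.erase (ep ends e₀ s₀), log (∑ x, vExp η ends Ci lam i x) +
    1 / η * ∑ e ∈ univ.erase e₀, log (∑ x₁, ∑ x₂, eExp η Ce lam e x₁ x₂), fun lam' h => ?_⟩
  have hv : ∀ i ∈ univ.erase (ep ends e₀ s₀),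
      log (∑ x, vExp η ends Ci lam' i x) = log (∑ x, vExp η ends Ci lam i x) := fun i hi => by
    simp_rw [vExp_of_agreeOffBlock h, if_neg (ne_of_mem_erase hi).symm, mul_one]
  have he : ∀ e ∈ univ.erase e₀, log (∑ x₁, ∑ x₂, eExp η Ce lam' e x₁ x₂) =
      log (∑ x₁, ∑ x₂, eExp η Ce lam e x₁ x₂) := fun e he => by
    simp_rw [eExp_of_agreeOffBlock_of_ne h (ne_of_mem_erase he)]
  rw [dualL, ← add_sum_erase _ _ (mem_univ (ep ends e₀ s₀)), ← add_sum_erase _ _ (mem_univ e₀),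
    sum_congr rfl hv, sum_congr rfl he, ← sum_eMarg (s := s₀), blockObjective]
  simp_rw [vExp_of_agreeOffBlock h, if_true, eMarg_of_agreeOffBlock h]
  ring

lemma empUpdate_agreeOffBlock :
    AgreeOffBlock lam (empUpdate η ends Ci Ce lam e₀ s₀) e₀ s₀ := fun e s x hes => by
  simp only [empUpdate, if_neg hes]

lemma empUpdate_balanced [Nonempty (Fin d)] (hη : η ≠ 0) (x : Fin d) :
    vExp η ends Ci lam (ep ends e₀ s₀) x *
        blockTilt η lam (empUpdate η ends Ci Ce lam e₀ s₀) e₀ s₀ x ^ 2 =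
      (∑ y, vExp η ends Ci lam (ep ends e₀ s₀) y) / (∑ y, eMarg η Ce lam e₀ s₀ y) *
        eMarg η Ce lam e₀ s₀ x := by
  have hv : 0 < vExp η ends Ci lam (ep ends e₀ s₀) x := exp_pos _
  have hZv : 0 < ∑ y, vExp η ends Ci lam (ep ends e₀ s₀) y :=
    sum_pos (fun _ _ => exp_pos _) univ_nonempty
  have hZe : 0 < ∑ y, eMarg η Ce lam e₀ s₀ y := sum_pos (fun _ _ => eMarg_pos _) univ_nonempty
  have hratio : 0 < Smarg η Ce lam e₀ s₀ x / muV η ends Ci lam (ep ends e₀ s₀) x := by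
    rw [Smarg_eq_eMarg_div, muV]
    exact div_pos (div_pos (eMarg_pos x) hZe) (div_pos hv hZv)
  have htilt : blockTilt η lam (empUpdate η ends Ci Ce lam e₀ s₀) e₀ s₀ x ^ 2 =
      Smarg η Ce lam e₀ s₀ x / muV η ends Ci lam (ep ends e₀ s₀) x := by
    rw [blockTilt, empUpdate, if_pos ⟨rfl, rfl⟩, ← exp_nat_mul]
    convert exp_log hratio using 2
    field_simp
    ring
  rw [htilt, Smarg_eq_eMarg_div, muV]
  field_simp

end Block

theorem emp_update_block_optimal_general (η : ℝ) (hη : 0 < η) (hd : 2 ≤ d)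
    (ends : Fin m → Fin n × Fin n)
    (Ci : Fin n → Fin d → ℝ) (Ce : Fin m → Fin d → Fin d → ℝ)
    (lam : Fin m → Fin 2 → Fin d → ℝ) (e₀ : Fin m) (s₀ : Fin 2) :
    (∀ x, Smarg η Ce (empUpdate η ends Ci Ce lam e₀ s₀) e₀ s₀ x
        = muV η ends Ci (empUpdate η ends Ci Ce lam e₀ s₀) (ep ends e₀ s₀) x) ∧
    (∀ lam' : Fin m → Fin 2 → Fin d → ℝ,
      (∀ e s x, ¬(e = e₀ ∧ s = s₀) → lam' e s x = lam e s x) →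
      dualL η ends Ci Ce (empUpdate η ends Ci Ce lam e₀ s₀)
        ≤ dualL η ends Ci Ce lam') := by
  have : Nonempty (Fin d) := ⟨⟨0, by omega⟩⟩
  have hagree : AgreeOffBlock lam (empUpdate η ends Ci Ce lam e₀ s₀) e₀ s₀ :=
    empUpdate_agreeOffBlock
  have hc : 0 < (∑ y, vExp η ends Ci lam (ep ends e₀ s₀) y) / ∑ y, eMarg η Ce lam e₀ s₀ y :=
    div_pos (sum_pos (fun _ _ => exp_pos _) univ_nonempty)
      (sum_pos (fun _ _ => eMarg_pos _) univ_nonempty)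
  refine ⟨fun x => ?_, fun lam' hlam' => ?_⟩
  · rw [Smarg_of_agreeOffBlock hagree, muV_of_agreeOffBlock hagree]
    exact (div_sum_eq_div_sum_of_balanced (fun _ => (exp_pos _).ne') hc.ne'
      (empUpdate_balanced hη.ne') x).symm
  · obtain ⟨R, hR⟩ := exists_dualL_eq_blockObjective_add η ends Ci Ce lam e₀ s₀
    rw [hR _ hagree, hR _ hlam']
    gcongr
    exact blockObjective_le_of_balanced (fun _ => exp_pos _) eMarg_pos (fun _ => exp_pos _)
      (fun _ => exp_pos _) hc (empUpdate_balanced hη.ne')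

/-- The EMP update satisfies the block optimality condition
`S_{e₀,i₀}^{λ'} = μ_{i₀}^{λ'}`, i.e. it minimizes `L` over the block
`{λ_{e₀,i₀}(x)}_{x∈χ}`. -/
theorem emp_update_block_optimal (η : ℝ) (hη : 0 < η) (hd : 2 ≤ d)
    (ends : Fin m → Fin n × Fin n)
    (hsimple : ∀ e, (ends e).1 ≠ (ends e).2)
    (Ci : Fin n → Fin d → ℝ) (Ce : Fin m → Fin d → Fin d → ℝ)
    (lam : Fin m → Fin 2 → Fin d → ℝ) (e₀ : Fin m) (s₀ : Fin 2) :
    (∀ x, Smarg η Ce (empUpdate η ends Ci Ce lam e₀ s₀) e₀ s₀ x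
        = muV η ends Ci (empUpdate η ends Ci Ce lam e₀ s₀) (ep ends e₀ s₀) x) ∧
    (∀ lam' : Fin m → Fin 2 → Fin d → ℝ,
      (∀ e s x, ¬(e = e₀ ∧ s = s₀) → lam' e s x = lam e s x) →
      dualL η ends Ci Ce (empUpdate η ends Ci Ce lam e₀ s₀)
        ≤ dualL η ends Ci Ce lam') :=
  emp_update_block_optimal_general η hη hd ends Ci Ce lam e₀ s₀

end
end

section
/- Applying the EMP update at edge e, endpoint i, to dual variable λ decreases the dual objective by L(λ) - L(λ') = -(2/η)·log(Σ_{x∈χ} √(S_{e,i}^λ(x)·μ_i^λ(x))), which is at least (1/(4η))·‖S_{e,i}^λ - μ_i^λ‖₁². -/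
/-!
The update multiplies the vertex factors of `ep ends e₀ s₀` by `√(S / μ)` and the factors of the
edge `e₀` by `√(μ / S)`, read at the endpoint `s₀`; no other factor changes. Integrating these
ratios against the normalized marginals `μ` resp. `S` shows that both affected partition functions
are multiplied by the Bhattacharyya coefficient `H = ∑ √(S μ)`, so `L` changes by `(2 / η) log H`.
Writing `|S - μ| = |√S - √μ| (√S + √μ)`, Cauchy–Schwarz gives `‖S - μ‖₁² ≤ 4 (1 - H²)`, and
`log (H²) ≤ H² - 1` turns this into `‖S - μ‖₁² ≤ -8 log H`.
-/

open Finset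

noncomputable section

variable {n m d : ℕ}

open Real

section Bhattacharyya

variable {ι : Type*} [Fintype ι]

lemma sum_mul_sqrt_div_sqrt (p q : ι → ℝ) (hp : ∀ x, 0 ≤ p x) :
    ∑ x, p x * (√(q x) / √(p x)) = ∑ x, √(p x * q x) := by
  refine sum_congr rfl fun x _ => ?_
  rw [sqrt_mul (hp x), mul_div_left_comm, div_sqrt, mul_comm]

lemma sum_sq_sqrt_sub_sqrt {p q : ι → ℝ} (hp : ∀ x, 0 ≤ p x) (hq : ∀ x, 0 ≤ q x)
    (hp1 : ∑ x, p x = 1) (hq1 : ∑ x, q x = 1) :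
    ∑ x, (√(p x) - √(q x)) ^ 2 = 2 - 2 * ∑ x, √(p x * q x) := by
  have h x : (√(p x) - √(q x)) ^ 2 = p x + q x - 2 * √(p x * q x) := by
    rw [sub_sq, sq_sqrt (hp x), sq_sqrt (hq x), sqrt_mul (hp x)]
    ring
  simp only [h, sum_sub_distrib, sum_add_distrib, ← mul_sum, hp1, hq1]
  ring

lemma sum_sq_sqrt_add_sqrt {p q : ι → ℝ} (hp : ∀ x, 0 ≤ p x) (hq : ∀ x, 0 ≤ q x)
    (hp1 : ∑ x, p x = 1) (hq1 : ∑ x, q x = 1) :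
    ∑ x, (√(p x) + √(q x)) ^ 2 = 2 + 2 * ∑ x, √(p x * q x) := by
  have h x : (√(p x) + √(q x)) ^ 2 = p x + q x + 2 * √(p x * q x) := by
    rw [add_sq, sq_sqrt (hp x), sq_sqrt (hq x), sqrt_mul (hp x)]
    ring
  simp only [h, sum_add_distrib, ← mul_sum, hp1, hq1]
  ring

lemma sq_sum_abs_sub_le_four_mul_one_sub_sq {p q : ι → ℝ} (hp : ∀ x, 0 ≤ p x)
    (hq : ∀ x, 0 ≤ q x) (hp1 : ∑ x, p x = 1) (hq1 : ∑ x, q x = 1) :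
    (∑ x, |p x - q x|) ^ 2 ≤ 4 * (1 - (∑ x, √(p x * q x)) ^ 2) := by
  have hfactor x : |p x - q x| = |√(p x) - √(q x)| * (√(p x) + √(q x)) := by
    rw [← abs_of_nonneg (by positivity : 0 ≤ √(p x) + √(q x)), ← abs_mul, mul_comm,
      ← sq_sub_sq, sq_sqrt (hp x), sq_sqrt (hq x)]
  calc (∑ x, |p x - q x|) ^ 2
      = (∑ x, |√(p x) - √(q x)| * (√(p x) + √(q x))) ^ 2 := by simp only [hfactor]
    _ ≤ (∑ x, |√(p x) - √(q x)| ^ 2) * ∑ x, (√(p x) + √(q x)) ^ 2 :=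
        sum_mul_sq_le_sq_mul_sq _ _ _
    _ = 4 * (1 - (∑ x, √(p x * q x)) ^ 2) := by
        simp only [sq_abs, sum_sq_sqrt_sub_sqrt hp hq hp1 hq1,
          sum_sq_sqrt_add_sqrt hp hq hp1 hq1]
        ring

lemma sq_sum_abs_sub_le_neg_log {p q : ι → ℝ} (hp : ∀ x, 0 ≤ p x) (hq : ∀ x, 0 ≤ q x)
    (hp1 : ∑ x, p x = 1) (hq1 : ∑ x, q x = 1) (hpos : 0 < ∑ x, √(p x * q x)) :
    (∑ x, |p x - q x|) ^ 2 ≤ -8 * log (∑ x, √(p x * q x)) := by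
  have hlog := log_le_sub_one_of_pos (pow_pos hpos 2)
  rw [log_pow] at hlog
  push_cast at hlog
  linarith [sq_sum_abs_sub_le_four_mul_one_sub_sq hp hq hp1 hq1]

end Bhattacharyya

lemma exp_mul_one_div_two_mul_log_div {η a b : ℝ} (hη : η ≠ 0) (ha : 0 < a) (hb : 0 < b) :
    exp (η * (1 / (2 * η) * log (a / b))) = √a / √b := by
  rw [show η * (1 / (2 * η) * log (a / b)) = log (a / b) * (1 / 2) by field_simp,
    ← rpow_def_of_pos (div_pos ha hb), ← sqrt_eq_rpow, sqrt_div ha.le]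

section Factors

variable (η : ℝ) (ends : Fin m → Fin n × Fin n) (Ci : Fin n → Fin d → ℝ)
  (Ce : Fin m → Fin d → Fin d → ℝ) (lam : Fin m → Fin 2 → Fin d → ℝ)

lemma vExp_add (δ : Fin m → Fin 2 → Fin d → ℝ) (i : Fin n) (x : Fin d) :
    vExp η ends Ci (lam + δ) i x
      = vExp η ends Ci lam i x * exp (η * ∑ e, ∑ s, if ep ends e s = i then δ e s x else 0) := by
  simp only [vExp, Pi.add_apply, ite_add_zero, sum_add_distrib, ← exp_add]
  ring_nf

lemma eExp_add (δ : Fin m → Fin 2 → Fin d → ℝ) (e : Fin m) (x₁ x₂ : Fin d) :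
    eExp η Ce (lam + δ) e x₁ x₂ = eExp η Ce lam e x₁ x₂ * exp (-(η * (δ e 0 x₁ + δ e 1 x₂))) := by
  simp only [eExp, Pi.add_apply, ← exp_add]
  ring_nf

variable [NeZero d]

lemma sum_vExp_pos (i : Fin n) : 0 < ∑ x, vExp η ends Ci lam i x :=
  sum_pos (fun _ _ => exp_pos _) univ_nonempty

lemma sum_eExp_pos (e : Fin m) : 0 < ∑ x₁, ∑ x₂, eExp η Ce lam e x₁ x₂ :=
  sum_pos (fun _ _ => sum_pos (fun _ _ => exp_pos _) univ_nonempty)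
    univ_nonempty

lemma muV_pos (i : Fin n) (x : Fin d) : 0 < muV η ends Ci lam i x :=
  div_pos (exp_pos _) (sum_vExp_pos η ends Ci lam i)

lemma Smarg_pos (e : Fin m) (s : Fin 2) (x : Fin d) : 0 < Smarg η Ce lam e s x := by
  have hmuE x₁ x₂ : 0 < muE η Ce lam e x₁ x₂ := div_pos (exp_pos _) (sum_eExp_pos η Ce lam e)
  unfold Smarg
  split_ifs <;> exact sum_pos (fun _ _ => hmuE _ _) univ_nonempty

lemma sum_muV (i : Fin n) : ∑ x, muV η ends Ci lam i x = 1 := by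
  simp only [muV, ← sum_div, div_self (sum_vExp_pos η ends Ci lam i).ne']

lemma sum_Smarg (e : Fin m) (s : Fin 2) : ∑ x, Smarg η Ce lam e s x = 1 := by
  have hZ := (sum_eExp_pos η Ce lam e).ne'
  fin_cases s
  · simp only [Smarg, muE, Fin.zero_eta, if_true, ← sum_div, div_self hZ]
  · simp only [Smarg, muE, Fin.mk_one, one_ne_zero, if_false]
    rw [sum_comm]
    simp only [← sum_div, div_self hZ]

lemma sum_vExp_mul (i : Fin n) (h : Fin d → ℝ) :
    ∑ x, vExp η ends Ci lam i x * h x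
      = (∑ x, vExp η ends Ci lam i x) * ∑ x, muV η ends Ci lam i x * h x := by
  have hZ := (sum_vExp_pos η ends Ci lam i).ne'
  simp only [mul_sum, muV, ← mul_assoc, mul_div_cancel₀ _ hZ]

lemma sum_eExp_mul_endpoint (e : Fin m) (s : Fin 2) (h : Fin d → ℝ) :
    ∑ x₁, ∑ x₂, eExp η Ce lam e x₁ x₂ * h (if s = 0 then x₁ else x₂)
      = (∑ x₁, ∑ x₂, eExp η Ce lam e x₁ x₂) * ∑ x, Smarg η Ce lam e s x * h x := by
  have hZ := (sum_eExp_pos η Ce lam e).ne'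
  fin_cases s
  · simp only [Smarg, muE, Fin.zero_eta, if_true, ← sum_div, ← sum_mul,
      mul_sum, ← mul_assoc, mul_div_cancel₀ _ hZ]
  · rw [sum_comm]
    simp only [Smarg, muE, Fin.mk_one, one_ne_zero, if_false, ← sum_div,
      ← sum_mul, mul_sum, ← mul_assoc, mul_div_cancel₀ _ hZ]

end Factors

section Increment

variable (η : ℝ) (ends : Fin m → Fin n × Fin n) (Ci : Fin n → Fin d → ℝ)
  (Ce : Fin m → Fin d → Fin d → ℝ) (lam : Fin m → Fin 2 → Fin d → ℝ) (e₀ : Fin m) (s₀ : Fin 2)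

def empIncrement : Fin m → Fin 2 → Fin d → ℝ :=
  fun e s x => if e = e₀ ∧ s = s₀ then
    1 / (2 * η) * log (Smarg η Ce lam e₀ s₀ x / muV η ends Ci lam (ep ends e₀ s₀) x) else 0

lemma empUpdate_eq_add :
    empUpdate η ends Ci Ce lam e₀ s₀ = lam + empIncrement η ends Ci Ce lam e₀ s₀ := by
  ext e s x
  by_cases h : e = e₀ ∧ s = s₀
  · obtain ⟨rfl, rfl⟩ := h
    simp [empUpdate, empIncrement]
  · simp [empUpdate, empIncrement, h]

lemma sum_ite_ep_empIncrement (i : Fin n) (x : Fin d) :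
    (∑ e, ∑ s, if ep ends e s = i then empIncrement η ends Ci Ce lam e₀ s₀ e s x else 0)
      = if ep ends e₀ s₀ = i then
          1 / (2 * η) * log (Smarg η Ce lam e₀ s₀ x / muV η ends Ci lam (ep ends e₀ s₀) x)
        else 0 := by
  rw [sum_eq_single e₀, sum_eq_single s₀]
  all_goals simp_all [empIncrement]

lemma empIncrement_add_empIncrement (e : Fin m) (x₁ x₂ : Fin d) :
    empIncrement η ends Ci Ce lam e₀ s₀ e 0 x₁ + empIncrement η ends Ci Ce lam e₀ s₀ e 1 x₂
      = if e = e₀ then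
          1 / (2 * η) * log (Smarg η Ce lam e₀ s₀ (if s₀ = 0 then x₁ else x₂)
            / muV η ends Ci lam (ep ends e₀ s₀) (if s₀ = 0 then x₁ else x₂))
        else 0 := by
  by_cases he : e = e₀ <;> fin_cases s₀ <;> simp [empIncrement, he]

end Increment

section Update

variable {η : ℝ} (ends : Fin m → Fin n × Fin n) (Ci : Fin n → Fin d → ℝ)
  (Ce : Fin m → Fin d → Fin d → ℝ) (lam : Fin m → Fin 2 → Fin d → ℝ) (e₀ : Fin m) (s₀ : Fin 2)
  (hη : 0 < η) [NeZero d]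
include hη

lemma vExp_empUpdate (i : Fin n) (x : Fin d) :
    vExp η ends Ci (empUpdate η ends Ci Ce lam e₀ s₀) i x
      = vExp η ends Ci lam i x * if ep ends e₀ s₀ = i then
          √(Smarg η Ce lam e₀ s₀ x) / √(muV η ends Ci lam (ep ends e₀ s₀) x) else 1 := by
  rw [empUpdate_eq_add, vExp_add, sum_ite_ep_empIncrement]
  split_ifs
  · rw [exp_mul_one_div_two_mul_log_div hη.ne' (Smarg_pos ..) (muV_pos ..)]
  · simp

lemma eExp_empUpdate (e : Fin m) (x₁ x₂ : Fin d) :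
    eExp η Ce (empUpdate η ends Ci Ce lam e₀ s₀) e x₁ x₂
      = eExp η Ce lam e x₁ x₂ * if e = e₀ then
          √(muV η ends Ci lam (ep ends e₀ s₀) (if s₀ = 0 then x₁ else x₂))
            / √(Smarg η Ce lam e₀ s₀ (if s₀ = 0 then x₁ else x₂)) else 1 := by
  rw [empUpdate_eq_add, eExp_add, empIncrement_add_empIncrement]
  by_cases he : e = e₀
  · simp only [if_pos he]
    rw [exp_neg, exp_mul_one_div_two_mul_log_div hη.ne' (Smarg_pos ..) (muV_pos ..), inv_div]
  · simp [he]

lemma sum_vExp_empUpdate (i : Fin n) :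
    ∑ x, vExp η ends Ci (empUpdate η ends Ci Ce lam e₀ s₀) i x
      = (∑ x, vExp η ends Ci lam i x) * if ep ends e₀ s₀ = i then
          ∑ x, √(Smarg η Ce lam e₀ s₀ x * muV η ends Ci lam (ep ends e₀ s₀) x) else 1 := by
  simp only [vExp_empUpdate ends Ci Ce lam e₀ s₀ hη]
  split_ifs with h
  · subst h
    simp only [sum_vExp_mul, sum_mul_sqrt_div_sqrt _ _ fun x => (muV_pos ..).le, mul_comm]
  · simp

lemma sum_eExp_empUpdate (e : Fin m) :
    ∑ x₁, ∑ x₂, eExp η Ce (empUpdate η ends Ci Ce lam e₀ s₀) e x₁ x₂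
      = (∑ x₁, ∑ x₂, eExp η Ce lam e x₁ x₂) * if e = e₀ then
          ∑ x, √(Smarg η Ce lam e₀ s₀ x * muV η ends Ci lam (ep ends e₀ s₀) x) else 1 := by
  rcases eq_or_ne e e₀ with rfl | he
  · simp only [eExp_empUpdate ends Ci Ce lam _ s₀ hη, if_true]
    rw [sum_eExp_mul_endpoint (h := fun x => √(muV η ends Ci lam (ep ends e s₀) x)
      / √(Smarg η Ce lam e s₀ x)), sum_mul_sqrt_div_sqrt _ _ fun x => (Smarg_pos ..).le]
  · simp [eExp_empUpdate ends Ci Ce lam _ s₀ hη, he]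

end Update

section Objective

variable {η : ℝ} (ends : Fin m → Fin n × Fin n) (Ci : Fin n → Fin d → ℝ)
  (Ce : Fin m → Fin d → Fin d → ℝ) (lam : Fin m → Fin 2 → Fin d → ℝ) (e₀ : Fin m) (s₀ : Fin 2)
  [NeZero d]

lemma sum_sqrt_Smarg_mul_muV_pos :
    0 < ∑ x, √(Smarg η Ce lam e₀ s₀ x * muV η ends Ci lam (ep ends e₀ s₀) x) :=
  sum_pos (fun _ _ => sqrt_pos.mpr (mul_pos (Smarg_pos ..) (muV_pos ..)))
    univ_nonempty

lemma dualL_empUpdate (hη : 0 < η) :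
    dualL η ends Ci Ce (empUpdate η ends Ci Ce lam e₀ s₀)
      = dualL η ends Ci Ce lam + 2 / η *
          log (∑ x, √(Smarg η Ce lam e₀ s₀ x * muV η ends Ci lam (ep ends e₀ s₀) x)) := by
  have log_mul_ite {p : Prop} [Decidable p] {a b : ℝ} (ha : 0 < a) (hb : 0 < b) :
      log (a * if p then b else 1) = log a + if p then log b else 0 := by
    split_ifs <;> simp [log_mul ha.ne' hb.ne']
  have hH := sum_sqrt_Smarg_mul_muV_pos ends Ci Ce lam e₀ s₀ (η := η)
  simp only [dualL, sum_vExp_empUpdate ends Ci Ce lam e₀ s₀ hη,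
    sum_eExp_empUpdate ends Ci Ce lam e₀ s₀ hη, log_mul_ite (sum_vExp_pos ..) hH,
    log_mul_ite (sum_eExp_pos ..) hH, sum_add_distrib, sum_ite_eq',
    sum_ite_eq, mem_univ, if_true]
  ring

end Objective

/-- The EMP update at edge `e₀`, endpoint `i₀ = ep ends e₀ s₀`, decreases the
dual objective by exactly `-(2/η) log Σ_x √(S_{e₀,i₀}^λ(x) μ_{i₀}^λ(x))`, which
is at least `(1/(4η)) ‖S_{e₀,i₀}^λ - μ_{i₀}^λ‖₁²`. -/
theorem emp_update_improvement (η : ℝ) (hη : 0 < η) (hd : 2 ≤ d)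
    (ends : Fin m → Fin n × Fin n)
    (Ci : Fin n → Fin d → ℝ) (Ce : Fin m → Fin d → Fin d → ℝ)
    (lam : Fin m → Fin 2 → Fin d → ℝ) (e₀ : Fin m) (s₀ : Fin 2) :
    dualL η ends Ci Ce lam - dualL η ends Ci Ce (empUpdate η ends Ci Ce lam e₀ s₀)
      = -(2 / η) * Real.log (∑ x, Real.sqrt
          (Smarg η Ce lam e₀ s₀ x * muV η ends Ci lam (ep ends e₀ s₀) x)) ∧
    (1 / (4 * η)) *
        (∑ x, |Smarg η Ce lam e₀ s₀ x - muV η ends Ci lam (ep ends e₀ s₀) x|) ^ 2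
      ≤ dualL η ends Ci Ce lam
          - dualL η ends Ci Ce (empUpdate η ends Ci Ce lam e₀ s₀) := by
  have : NeZero d := ⟨by omega⟩
  have hgain : dualL η ends Ci Ce lam - dualL η ends Ci Ce (empUpdate η ends Ci Ce lam e₀ s₀)
      = -(2 / η) * log (∑ x, √(Smarg η Ce lam e₀ s₀ x * muV η ends Ci lam (ep ends e₀ s₀) x)) := by
    rw [dualL_empUpdate ends Ci Ce lam e₀ s₀ hη]
    ring
  refine ⟨hgain, ?_⟩
  have hTV := sq_sum_abs_sub_le_neg_log (fun x => (Smarg_pos η Ce lam e₀ s₀ x).le)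
    (fun x => (muV_pos η ends Ci lam (ep ends e₀ s₀) x).le) (sum_Smarg η Ce lam e₀ s₀)
    (sum_muV η ends Ci lam (ep ends e₀ s₀)) (sum_sqrt_Smarg_mul_muV_pos ends Ci Ce lam e₀ s₀)
  rw [hgain, show -(2 / η) = 1 / (4 * η) * -8 by field_simp; ring, mul_assoc]
  exact mul_le_mul_of_nonneg_left hTV (by positivity)

end
end

section
/- For probability distributions p, q₁, ..., q_N on a finite set χ, it holds that N·(1 - (Σ_x (p(x)·∏_{k=1}^N q_k(x))^{1/(N+1)})^{N+1}) ≥ Σ_{k=1}^N (1 - (Σ_x √(p(x)q_k(x)))²). -/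
/-!
Fix `j`. Splitting `(p ∏ₖ qₖ)^{1/(N+1)} = √(p q_j)^{2/(N+1)} · ∏_{k ≠ j} qₖ^{1/(N+1)}` pointwise,
the generalized Hölder inequality with weights `2/(N+1)` and `1/(N+1)` (the latter `N - 1` times,
so they sum to `1`) bounds the geometric-mean overlap `G` by `B_j^{2/(N+1)}`, where `B_j` is the
Bhattacharyya coefficient of `p` and `q_j`, since every `qₖ` has total mass at most `1`. Hence
`1 - B_j² ≤ 1 - G^{N+1}` for each `j`, and summing over `j` gives the inequality.
-/

open Finset MeasureTheory

theorem Real.sum_rpow_mul_prod_rpow_le {χ ι : Type*} [Fintype χ] (s : Finset ι) {g : χ → ℝ}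
    {f : ι → χ → ℝ} (hg : ∀ x, 0 ≤ g x) (hf : ∀ i ∈ s, ∀ x, 0 ≤ f i x) {a : ℝ} {w : ι → ℝ}
    (haw : a + ∑ i ∈ s, w i = 1) (ha : 0 ≤ a) (hw : ∀ i ∈ s, 0 ≤ w i) :
    ∑ x, g x ^ a * ∏ i ∈ s, f i x ^ w i ≤ (∑ x, g x) ^ a * ∏ i ∈ s, (∑ x, f i x) ^ w i := by
  let _ : MeasurableSpace χ := ⊤
  have ofReal_mul_prod {y : ℝ} {z : ι → ℝ} (hy : 0 ≤ y) (hz : ∀ i ∈ s, 0 ≤ z i) :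
      ENNReal.ofReal (y ^ a * ∏ i ∈ s, z i ^ w i)
        = ENNReal.ofReal y ^ a * ∏ i ∈ s, ENNReal.ofReal (z i) ^ w i := by
    rw [ENNReal.ofReal_mul (Real.rpow_nonneg hy a), ENNReal.ofReal_rpow_of_nonneg hy ha,
      ENNReal.ofReal_prod_of_nonneg fun i hi => Real.rpow_nonneg (hz i hi) _]
    exact congrArg _ <| prod_congr rfl fun i hi =>
      (ENNReal.ofReal_rpow_of_nonneg (hz i hi) (hw i hi)).symm
  have ofReal_sum {h : χ → ℝ} (hh : ∀ x, 0 ≤ h x) :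
      ∑ x, ENNReal.ofReal (h x) = ENNReal.ofReal (∑ x, h x) :=
    (ENNReal.ofReal_sum_of_nonneg fun x _ => hh x).symm
  have holder := ENNReal.lintegral_mul_prod_norm_pow_le (μ := Measure.count) s
    (g := fun x => ENNReal.ofReal (g x)) (f := fun i x => ENNReal.ofReal (f i x))
    (measurable_of_countable _).aemeasurable (fun i _ => (measurable_of_countable _).aemeasurable)
    a haw ha hw
  simp only [lintegral_fintype, Measure.count_singleton, mul_one] at holder
  have hrhs : 0 ≤ (∑ x, g x) ^ a * ∏ i ∈ s, (∑ x, f i x) ^ w i :=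
    mul_nonneg (Real.rpow_nonneg (sum_nonneg fun x _ => hg x) a)
      (prod_nonneg fun i hi => Real.rpow_nonneg (sum_nonneg fun x _ => hf i hi x) _)
  rw [← ENNReal.ofReal_le_ofReal_iff hrhs, ← ofReal_sum fun x => ?_,
    ofReal_mul_prod (sum_nonneg fun x _ => hg x) fun i hi => sum_nonneg fun x _ => hf i hi x]
  · simp only [ofReal_mul_prod (hg _) fun i hi => hf i hi _, ← ofReal_sum hg]
    rwa [prod_congr rfl fun i hi => by rw [← ofReal_sum (hf i hi)]]
  · exact mul_nonneg (Real.rpow_nonneg (hg x) a)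
      (prod_nonneg fun i hi => Real.rpow_nonneg (hf i hi x) _)

theorem mul_prod_rpow_eq_sqrt_rpow_mul_prod_erase {ι : Type*} [Fintype ι] [DecidableEq ι]
    {a : ℝ} {b : ι → ℝ} (ha : 0 ≤ a) (hb : ∀ k, 0 ≤ b k) (j : ι) (t : ℝ) :
    (a * ∏ k, b k) ^ t = √(a * b j) ^ (2 * t) * ∏ k ∈ univ.erase j, b k ^ t := by
  have hab : 0 ≤ a * b j := mul_nonneg ha (hb j)
  rw [← mul_prod_erase univ b (mem_univ j), ← mul_assoc,
    Real.mul_rpow hab (prod_nonneg fun k _ => hb k), Real.finsetProd_rpow _ _ fun k _ => hb k,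
    Real.sqrt_eq_rpow, ← Real.rpow_mul hab, one_div, inv_mul_cancel_left₀ two_ne_zero]

section Overlap

variable {χ : Type*} [Fintype χ]

noncomputable def bhattacharyyaCoeff (p q : χ → ℝ) : ℝ :=
  ∑ x, √(p x * q x)

noncomputable def geomMeanOverlap {N : ℕ} (p : χ → ℝ) (q : Fin N → χ → ℝ) : ℝ :=
  ∑ x, (p x * ∏ k, q k x) ^ ((1 : ℝ) / (N + 1))

theorem geomMeanOverlap_rpow_le_bhattacharyyaCoeff_sq {N : ℕ} {p : χ → ℝ} {q : Fin N → χ → ℝ}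
    (hp : ∀ x, 0 ≤ p x) (hq : ∀ k x, 0 ≤ q k x) (hq1 : ∀ k, ∑ x, q k x ≤ 1) (j : Fin N) :
    geomMeanOverlap p q ^ ((N : ℝ) + 1) ≤ bhattacharyyaCoeff p (q j) ^ 2 := by
  set t : ℝ := 1 / (N + 1)
  have ht : 0 ≤ t := by positivity
  have htN : t * (N + 1) = 1 := one_div_mul_cancel (by positivity)
  have hB : 0 ≤ bhattacharyyaCoeff p (q j) := sum_nonneg fun x _ => Real.sqrt_nonneg _
  have hweights : 2 * t + ∑ k ∈ univ.erase j, t = 1 := by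
    rw [sum_const, card_erase_of_mem (mem_univ j), card_univ, Fintype.card_fin, nsmul_eq_mul,
      Nat.cast_pred j.pos]
    linear_combination htN
  have hG : geomMeanOverlap p q ≤ bhattacharyyaCoeff p (q j) ^ (2 * t) := calc
    geomMeanOverlap p q = ∑ x, √(p x * q j x) ^ (2 * t) * ∏ k ∈ univ.erase j, q k x ^ t :=
      sum_congr rfl fun x _ =>
        mul_prod_rpow_eq_sqrt_rpow_mul_prod_erase (hp x) (fun k => hq k x) j t
    _ ≤ bhattacharyyaCoeff p (q j) ^ (2 * t) * ∏ k ∈ univ.erase j, (∑ x, q k x) ^ t :=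
      Real.sum_rpow_mul_prod_rpow_le _ (fun x => Real.sqrt_nonneg _) (fun k _ => hq k) hweights
        (by positivity) fun _ _ => ht
    _ ≤ bhattacharyyaCoeff p (q j) ^ (2 * t) :=
      mul_le_of_le_one_right (Real.rpow_nonneg hB _) <| prod_le_one
        (fun k _ => Real.rpow_nonneg (sum_nonneg fun x _ => hq k x) _)
        fun k _ => Real.rpow_le_one (sum_nonneg fun x _ => hq k x) (hq1 k) ht
  calc geomMeanOverlap p q ^ ((N : ℝ) + 1)
      ≤ (bhattacharyyaCoeff p (q j) ^ (2 * t)) ^ ((N : ℝ) + 1) :=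
        Real.rpow_le_rpow (sum_nonneg fun x _ => Real.rpow_nonneg
          (mul_nonneg (hp x) (prod_nonneg fun k _ => hq k x)) _) hG (by positivity)
    _ = bhattacharyyaCoeff p (q j) ^ 2 := by
        rw [← Real.rpow_mul hB, mul_assoc, htN, mul_one, Real.rpow_two]

end Overlap

theorem geometric_mean_overlap_inequality_general
    {χ : Type*} [Fintype χ] (N : ℕ) (p : χ → ℝ) (q : Fin N → χ → ℝ)
    (hp : ∀ x, 0 ≤ p x)
    (hq : ∀ k x, 0 ≤ q k x) (hq1 : ∀ k, ∑ x, q k x = 1) :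
    ∑ k, (1 - (∑ x, Real.sqrt (p x * q k x)) ^ 2)
      ≤ (N : ℝ) * (1 - (∑ x, (p x * ∏ k, q k x) ^ ((1 : ℝ) / (N + 1)))
          ^ ((N : ℝ) + 1)) := by
  have hoverlap (k : Fin N) :=
    geomMeanOverlap_rpow_le_bhattacharyyaCoeff_sq hp hq (fun k => (hq1 k).le) k
  calc ∑ k, (1 - bhattacharyyaCoeff p (q k) ^ 2)
      ≤ ∑ _k : Fin N, (1 - geomMeanOverlap p q ^ ((N : ℝ) + 1)) :=
        sum_le_sum fun k _ => sub_le_sub_left (hoverlap k) 1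
    _ = N * (1 - geomMeanOverlap p q ^ ((N : ℝ) + 1)) := by
        rw [sum_const, card_univ, Fintype.card_fin, nsmul_eq_mul]

/-- Multi-distribution overlap inequality: for probability distributions
`p, q₁, …, q_N` on a finite set `χ`,
`N (1 - (Σ_x (p(x) ∏_k q_k(x))^{1/(N+1)})^{N+1}) ≥ Σ_k (1 - (Σ_x √(p(x)q_k(x)))²)`. -/
theorem geometric_mean_overlap_inequality
    {χ : Type*} [Fintype χ] (N : ℕ) (p : χ → ℝ) (q : Fin N → χ → ℝ)
    (hp : ∀ x, 0 ≤ p x) (hp1 : ∑ x, p x = 1)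
    (hq : ∀ k x, 0 ≤ q k x) (hq1 : ∀ k, ∑ x, q k x = 1) :
    ∑ k, (1 - (∑ x, Real.sqrt (p x * q k x)) ^ 2)
      ≤ (N : ℝ) * (1 - (∑ x, (p x * ∏ k, q k x) ^ ((1 : ℝ) / (N + 1)))
          ^ ((N : ℝ) + 1)) :=
  geometric_mean_overlap_inequality_general N p q hp hq hq1
end
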